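/- Let μ ≥ 0, δ ∈ (0,1), and let N ≥ 0 be a real number satisfying N ≥ μ − √(2·μ·log(1/δ)). Then μ ≤ 2·log(1/δ) + N + √(2·N·log(1/δ)). -/

import Mathlib

open Real

theorem le_add_of_sq_le_mul_add_sq {a b c : ℝ} (hb : 0 ≤ b) (hc : 0 ≤ c)
    (h : a ^ 2 ≤ c * a + b ^ 2) : a ≤ c + b := by
  nlinarith

/- With `a = √(c x)` the hypothesis reads `a² ≤ c a + c y`, so `a ≤ c + √(c y)`, and then
`x ≤ y + a` gives the claim. -/
theorem le_add_add_sqrt_of_sub_sqrt_le {x y c : ℝ} (hx : 0 ≤ x) (hc : 0 ≤ c)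
    (h : x - √(c * x) ≤ y) : x ≤ c + y + √(c * y) := by
  have hsq : √(c * x) ^ 2 ≤ c * √(c * x) + √(c * y) ^ 2 :=
    calc √(c * x) ^ 2 = c * x := sq_sqrt (by positivity)
      _ ≤ c * (√(c * x) + y) := by gcongr; linarith
      _ = c * √(c * x) + c * y := by ring
      _ ≤ c * √(c * x) + √(c * y) ^ 2 := by gcongr; rw [sq_sqrt']; exact le_max_left _ _
  linarith [le_add_of_sq_le_mul_add_sq (sqrt_nonneg (c * y)) hc hsq]

theorem mean_le_Uplus (μ δ N : ℝ) (hμ : 0 ≤ μ) (hδ : δ ∈ Set.Ioo (0 : ℝ) 1)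
    (h : μ - Real.sqrt (2 * μ * Real.log (1 / δ)) ≤ N) :
    μ ≤ 2 * Real.log (1 / δ) + N + Real.sqrt (2 * N * Real.log (1 / δ)) := by
  have hL : 0 ≤ Real.log (1 / δ) := log_nonneg (one_le_one_div hδ.1 hδ.2.le)
  rw [mul_right_comm] at h
  rw [mul_right_comm 2 N]
  exact le_add_add_sqrt_of_sub_sqrt_le hμ (mul_nonneg zero_le_two hL) h
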